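/- arXiv:1610.04409 — 3 statements merged into one kernel-verified Lean document; each statement's English description precedes it below -/
import Mathlib

section
/- The operator O = O_{(γ₁,γ₂)} on H^{(γ₁,c₁)} ⊗ H^{(γ₂,c₂)} satisfies the commutation relations [Δa⁻, O] = 0, [Δε, O] = O, and [Δa⁺, O] = 0; consequently O maps lowest weight vectors to lowest weight vectors, raising the Δε-eigenvalue by 1. -/
/-!
All of `Δa⁻`, `Δε`, `Δa⁺` and `O` are Kronecker sums `f ⊗ 1 + 1 ⊗ g`, and the commutator of two
Kronecker sums is the Kronecker sum of the commutators of the factors. On each factor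
`[a⁻, a⁺] = [γ]_q`, `[ε, a⁺] = a⁺` and `[a⁺, a⁺] = 0`. So `[Δε, O] = O` and `[Δa⁺, O] = 0`, while
`[Δa⁻, O]` is the scalar `q^{γ₂/2} α [γ₁]_q + q^{-γ₁/2} β [γ₂]_q`, where `α`, `β` are the
coefficients of `O`; they are chosen exactly so that this scalar vanishes.
-/

noncomputable section
noncomputable section

/-- The `q`-number `[γ]_q = (q^γ - q^(-γ))/(q - q⁻¹)`. -/
def qnum (q γ : ℝ) : ℝ := (q ^ γ - q ^ (-γ)) / (q - q⁻¹)

/-- The representation space `H^{(γ,c)}`: finitely supported functions `ℕ → ℂ`. -/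
abbrev HO : Type := ℕ →₀ ℂ

/-- The basis vector `h_m`. -/
def hv (m : ℕ) : HO := Finsupp.single m 1

/-- The lowering operator `a⁻ h_m = [γ]_q^{1/2} m^{1/2} h_{m-1}` (so `a⁻ h_0 = 0`). -/
def aMinus (q γ : ℝ) : HO →ₗ[ℂ] HO :=
  Finsupp.lift HO ℂ ℕ fun m => ((Real.sqrt (qnum q γ) * Real.sqrt m : ℝ) : ℂ) • hv (m - 1)

/-- The raising operator `a⁺ h_m = [γ]_q^{1/2} (m+1)^{1/2} h_{m+1}`. -/
def aPlus (q γ : ℝ) : HO →ₗ[ℂ] HO :=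
  Finsupp.lift HO ℂ ℕ fun m => ((Real.sqrt (qnum q γ) * Real.sqrt (m + 1) : ℝ) : ℂ) • hv (m + 1)

/-- The operator `ε h_m = (m + c) h_m`. -/
def epsOp (c : ℝ) : HO →ₗ[ℂ] HO :=
  Finsupp.lift HO ℂ ℕ fun m => (((m : ℝ) + c : ℝ) : ℂ) • hv m

open scoped TensorProduct

/-- The coproduct action of `a⁺` on `H^{(γ₁,c₁)} ⊗ H^{(γ₂,c₂)}`:
`Δa⁺ = q^{γ₂/2}(a⁺ ⊗ 1) + q^{−γ₁/2}(1 ⊗ a⁺)`. -/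
def ΔaPlus (q γ₁ γ₂ : ℝ) : HO ⊗[ℂ] HO →ₗ[ℂ] HO ⊗[ℂ] HO :=
  ((q ^ (γ₂ / 2) : ℝ) : ℂ) • (aPlus q γ₁).rTensor HO +
    ((q ^ (-(γ₁ / 2)) : ℝ) : ℂ) • (aPlus q γ₂).lTensor HO

/-- The coproduct action of `a⁻` on `H^{(γ₁,c₁)} ⊗ H^{(γ₂,c₂)}`:
`Δa⁻ = q^{γ₂/2}(a⁻ ⊗ 1) + q^{−γ₁/2}(1 ⊗ a⁻)`. -/
def ΔaMinus (q γ₁ γ₂ : ℝ) : HO ⊗[ℂ] HO →ₗ[ℂ] HO ⊗[ℂ] HO :=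
  ((q ^ (γ₂ / 2) : ℝ) : ℂ) • (aMinus q γ₁).rTensor HO +
    ((q ^ (-(γ₁ / 2)) : ℝ) : ℂ) • (aMinus q γ₂).lTensor HO

/-- The coproduct action of `ε` on `H^{(γ₁,c₁)} ⊗ H^{(γ₂,c₂)}`: `Δε = ε ⊗ 1 + 1 ⊗ ε`. -/
def Δeps (c₁ c₂ : ℝ) : HO ⊗[ℂ] HO →ₗ[ℂ] HO ⊗[ℂ] HO :=
  (epsOp c₁).rTensor HO + (epsOp c₂).lTensor HO

/-- The matrix coefficient of the braid operator `B_{(γ₁,c₁),(γ₂,c₂)}`. -/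
def bcoef (q γ₁ γ₂ c₁ c₂ : ℝ) (m m' k : ℕ) : ℝ :=
  q ^ (-(((m : ℝ) + c₁) * γ₂ + ((m' : ℝ) + c₂) * γ₁)) *
    Real.sqrt (Nat.choose (m + k - 1) (m - 1)) * Real.sqrt (Nat.choose (m' + k) m') *
    Real.sqrt ((q ^ (-(2 * γ₁)) - 1) * (1 - q ^ (2 * γ₂))) ^ k

/-- The braid operator `B_{(γ₁,c₁),(γ₂,c₂)} : H^{(γ₁,c₁)} ⊗ H^{(γ₂,c₂)} → H^{(γ₂,c₂)} ⊗ H^{(γ₁,c₁)}`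
(the flip composed with the `R`-matrix of `ho_q`), defined on basis vectors by
`B(h_m ⊗ h_{m'}) = q^{−((m+c₁)γ₂+(m'+c₂)γ₁)} Σ_{k=0}^m binom(m+k−1,m−1)^{1/2} binom(m'+k,m')^{1/2}
((q^{−2γ₁}−1)(1−q^{2γ₂}))^{k/2} h_{m'+k} ⊗ h_{m−k}`. -/
def braidOp (q γ₁ γ₂ c₁ c₂ : ℝ) : HO ⊗[ℂ] HO →ₗ[ℂ] HO ⊗[ℂ] HO :=
  TensorProduct.lift <|
    Finsupp.lift (HO →ₗ[ℂ] HO ⊗[ℂ] HO) ℂ ℕ fun m =>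
      Finsupp.lift (HO ⊗[ℂ] HO) ℂ ℕ fun m' =>
        ∑ k ∈ Finset.range (m + 1),
          ((bcoef q γ₁ γ₂ c₁ c₂ m m' k : ℝ) : ℂ) • (hv (m' + k) ⊗ₜ[ℂ] hv (m - k))

/-- The ladder operator
`O_{(γ₁,γ₂)} = q^{−γ₁/2}[γ₁]_q^{−1/2}[γ₂]_q^{1/2}(a⁺ ⊗ 1) − q^{γ₂/2}[γ₁]_q^{1/2}[γ₂]_q^{−1/2}(1 ⊗ a⁺)`
on `H^{(γ₁,c₁)} ⊗ H^{(γ₂,c₂)}` (the subtraction is written as adding the negated scalar multiple,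
since `Sub` is not directly available on this hom type). -/
def Oop (q γ₁ γ₂ : ℝ) : HO ⊗[ℂ] HO →ₗ[ℂ] HO ⊗[ℂ] HO :=
  ((q ^ (-(γ₁ / 2)) * (Real.sqrt (qnum q γ₁))⁻¹ * Real.sqrt (qnum q γ₂) : ℝ) : ℂ) •
      (aPlus q γ₁).rTensor HO +
    (-((q ^ (γ₂ / 2) * Real.sqrt (qnum q γ₁) * (Real.sqrt (qnum q γ₂))⁻¹ : ℝ) : ℂ)) •
      (aPlus q γ₂).lTensor HO

/-- The canonical zero of the tensor product (made an instance to help elaboration). -/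
noncomputable instance : Zero (HO ⊗[ℂ] HO) := AddMonoid.toZero

namespace Module.End

variable {R M N : Type*} [CommRing R] [AddCommGroup M] [Module R M] [AddCommGroup N] [Module R N]

def kroneckerSum (f : Module.End R M) (g : Module.End R N) : Module.End R (M ⊗[R] N) :=
  f.rTensor N + g.lTensor M

-- `Module.End R M` carries `Ring.instBracket` but no `LieAlgebra R` instance, so the library's
-- `smul_lie` and `lie_smul` do not apply to it.
lemma smul_lie (a : R) (f g : Module.End R M) : ⁅a • f, g⁆ = a • ⁅f, g⁆ := by
  rw [Ring.lie_def, Ring.lie_def, smul_mul_assoc, mul_smul_comm, smul_sub]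

lemma lie_smul (a : R) (f g : Module.End R M) : ⁅f, a • g⁆ = a • ⁅f, g⁆ := by
  rw [Ring.lie_def, Ring.lie_def, smul_mul_assoc, mul_smul_comm, smul_sub]

lemma rTensor_mul_lTensor (f : Module.End R M) (g : Module.End R N) :
    f.rTensor N * g.lTensor M = g.lTensor M * f.rTensor N := by
  rw [mul_eq_comp, mul_eq_comp, LinearMap.rTensor_comp_lTensor, LinearMap.lTensor_comp_rTensor]

lemma lie_kroneckerSum (f₁ g₁ : Module.End R M) (f₂ g₂ : Module.End R N) :
    ⁅kroneckerSum f₁ f₂, kroneckerSum g₁ g₂⁆ = kroneckerSum ⁅f₁, g₁⁆ ⁅f₂, g₂⁆ := by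
  simp only [kroneckerSum, Ring.lie_def, add_mul, mul_add, LinearMap.rTensor_sub,
    LinearMap.lTensor_sub, LinearMap.rTensor_mul, LinearMap.lTensor_mul, rTensor_mul_lTensor]
  abel

lemma kroneckerSum_comp_kroneckerSum (f₁ g₁ : Module.End R M) (f₂ g₂ : Module.End R N) :
    kroneckerSum f₁ f₂ ∘ₗ kroneckerSum g₁ g₂ =
      kroneckerSum g₁ g₂ ∘ₗ kroneckerSum f₁ f₂ + kroneckerSum ⁅f₁, g₁⁆ ⁅f₂, g₂⁆ := by
  rw [← lie_kroneckerSum, Ring.lie_def, mul_eq_comp, mul_eq_comp, add_sub_cancel]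

lemma kroneckerSum_smul_one_eq_zero {r s : R} (h : r + s = 0) :
    kroneckerSum (r • 1 : Module.End R M) (s • 1 : Module.End R N) = 0 := by
  simp only [kroneckerSum, LinearMap.rTensor_smul, LinearMap.lTensor_smul, one_eq_id,
    LinearMap.rTensor_id, LinearMap.lTensor_id, ← add_smul, h, zero_smul]

lemma kroneckerSum_zero : kroneckerSum (0 : Module.End R M) (0 : Module.End R N) = 0 := by
  simp only [kroneckerSum, LinearMap.rTensor_zero, LinearMap.lTensor_zero, add_zero]

end Module.End

open Module.End (kroneckerSum kroneckerSum_comp_kroneckerSum kroneckerSum_smul_one_eq_zero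
  kroneckerSum_zero)

lemma linearMap_ext_hv {X : Type*} [AddCommGroup X] [Module ℂ X] {φ ψ : HO →ₗ[ℂ] X}
    (h : ∀ m, φ (hv m) = ψ (hv m)) : φ = ψ :=
  Finsupp.lhom_ext' fun m => LinearMap.ext_ring (h m)

lemma aPlus_hv (q γ : ℝ) (m : ℕ) :
    aPlus q γ (hv m) = ((Real.sqrt (qnum q γ) * Real.sqrt (m + 1) : ℝ) : ℂ) • hv (m + 1) := by
  simp [aPlus, hv]

lemma aMinus_hv (q γ : ℝ) (m : ℕ) :
    aMinus q γ (hv m) = ((Real.sqrt (qnum q γ) * Real.sqrt m : ℝ) : ℂ) • hv (m - 1) := by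
  simp [aMinus, hv]

lemma epsOp_hv (c : ℝ) (m : ℕ) : epsOp c (hv m) = (((m : ℝ) + c : ℝ) : ℂ) • hv m := by
  simp only [epsOp, hv, Finsupp.lift_apply]
  rw [Finsupp.sum_single_index] <;> simp

lemma lie_aMinus_aPlus (q γ : ℝ) :
    ⁅aMinus q γ, aPlus q γ⁆ = ((Real.sqrt (qnum q γ) ^ 2 : ℝ) : ℂ) • 1 := by
  refine linearMap_ext_hv fun m => ?_
  simp only [Ring.lie_def, LinearMap.sub_apply, Module.End.mul_apply, LinearMap.smul_apply,
    Module.End.one_apply, aPlus_hv, aMinus_hv, map_smul, smul_smul, Nat.add_sub_cancel]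
  cases m with
  | zero => simp [sq]
  | succ n =>
    rw [Nat.add_sub_cancel, ← sub_smul]
    congr 1
    have sqrt_mul_self (x : ℝ) (hx : 0 ≤ x) : (√x : ℂ) * √x = x := by
      rw [← Complex.ofReal_mul, Real.mul_self_sqrt hx]
    have h₂ := sqrt_mul_self ((n : ℝ) + 1 + 1) (by positivity)
    have h₁ := sqrt_mul_self ((n : ℝ) + 1) (by positivity)
    push_cast at h₁ h₂ ⊢
    linear_combination (√(qnum q γ) : ℂ) ^ 2 * (h₂ - h₁)

lemma lie_epsOp_aPlus (c q γ : ℝ) : ⁅epsOp c, aPlus q γ⁆ = aPlus q γ := by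
  refine linearMap_ext_hv fun m => ?_
  simp only [Ring.lie_def, LinearMap.sub_apply, Module.End.mul_apply, aPlus_hv, epsOp_hv,
    map_smul, smul_smul, ← sub_smul]
  congr 1
  push_cast
  ring

lemma ΔaMinus_eq_kroneckerSum (q γ₁ γ₂ : ℝ) :
    ΔaMinus q γ₁ γ₂ = kroneckerSum (((q ^ (γ₂ / 2) : ℝ) : ℂ) • aMinus q γ₁)
      (((q ^ (-(γ₁ / 2)) : ℝ) : ℂ) • aMinus q γ₂) := by
  rw [ΔaMinus, kroneckerSum, LinearMap.rTensor_smul, LinearMap.lTensor_smul]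

lemma ΔaPlus_eq_kroneckerSum (q γ₁ γ₂ : ℝ) :
    ΔaPlus q γ₁ γ₂ = kroneckerSum (((q ^ (γ₂ / 2) : ℝ) : ℂ) • aPlus q γ₁)
      (((q ^ (-(γ₁ / 2)) : ℝ) : ℂ) • aPlus q γ₂) := by
  rw [ΔaPlus, kroneckerSum, LinearMap.rTensor_smul, LinearMap.lTensor_smul]

lemma Δeps_eq_kroneckerSum (c₁ c₂ : ℝ) : Δeps c₁ c₂ = kroneckerSum (epsOp c₁) (epsOp c₂) := rfl

lemma Oop_eq_kroneckerSum (q γ₁ γ₂ : ℝ) :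
    Oop q γ₁ γ₂ = kroneckerSum
      (((q ^ (-(γ₁ / 2)) * (Real.sqrt (qnum q γ₁))⁻¹ * Real.sqrt (qnum q γ₂) : ℝ) : ℂ) •
        aPlus q γ₁)
      ((-((q ^ (γ₂ / 2) * Real.sqrt (qnum q γ₁) * (Real.sqrt (qnum q γ₂))⁻¹ : ℝ) : ℂ)) •
        aPlus q γ₂) := by
  rw [Oop, kroneckerSum, LinearMap.rTensor_smul, LinearMap.lTensor_smul]

lemma ΔaMinus_comp_Oop (q γ₁ γ₂ : ℝ) :
    ΔaMinus q γ₁ γ₂ ∘ₗ Oop q γ₁ γ₂ = Oop q γ₁ γ₂ ∘ₗ ΔaMinus q γ₁ γ₂ := by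
  rw [ΔaMinus_eq_kroneckerSum, Oop_eq_kroneckerSum, kroneckerSum_comp_kroneckerSum]
  simp only [Module.End.smul_lie, Module.End.lie_smul, lie_aMinus_aPlus, smul_smul]
  rw [kroneckerSum_smul_one_eq_zero, add_zero]
  -- both scalars equal `q^{(γ₂-γ₁)/2} √[γ₁]_q √[γ₂]_q`, up to sign
  simp only [← Complex.ofReal_mul, ← Complex.ofReal_neg, ← Complex.ofReal_add,
    Complex.ofReal_eq_zero]
  have inv_mul_sq (s : ℝ) : s⁻¹ * s ^ 2 = s := by rw [sq, ← mul_assoc, inv_mul_mul_self]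
  linear_combination q ^ (-(γ₁ / 2)) * q ^ (γ₂ / 2) *
    (√(qnum q γ₂) * inv_mul_sq √(qnum q γ₁) - √(qnum q γ₁) * inv_mul_sq √(qnum q γ₂))

lemma Δeps_comp_Oop (q γ₁ γ₂ c₁ c₂ : ℝ) :
    Δeps c₁ c₂ ∘ₗ Oop q γ₁ γ₂ = Oop q γ₁ γ₂ ∘ₗ Δeps c₁ c₂ + Oop q γ₁ γ₂ := by
  rw [Δeps_eq_kroneckerSum, Oop_eq_kroneckerSum, kroneckerSum_comp_kroneckerSum,
    Module.End.lie_smul, Module.End.lie_smul, lie_epsOp_aPlus, lie_epsOp_aPlus]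

lemma ΔaPlus_comp_Oop (q γ₁ γ₂ : ℝ) :
    ΔaPlus q γ₁ γ₂ ∘ₗ Oop q γ₁ γ₂ = Oop q γ₁ γ₂ ∘ₗ ΔaPlus q γ₁ γ₂ := by
  rw [ΔaPlus_eq_kroneckerSum, Oop_eq_kroneckerSum, kroneckerSum_comp_kroneckerSum]
  simp only [Module.End.smul_lie, Module.End.lie_smul, (Commute.refl _).lie_eq, smul_zero,
    kroneckerSum_zero, add_zero]

theorem stmt5_general (q γ₁ γ₂ c₁ c₂ : ℝ) :
    (ΔaMinus q γ₁ γ₂ ∘ₗ Oop q γ₁ γ₂ = Oop q γ₁ γ₂ ∘ₗ ΔaMinus q γ₁ γ₂) ∧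
    (Δeps c₁ c₂ ∘ₗ Oop q γ₁ γ₂ = Oop q γ₁ γ₂ ∘ₗ Δeps c₁ c₂ + Oop q γ₁ γ₂) ∧
    (ΔaPlus q γ₁ γ₂ ∘ₗ Oop q γ₁ γ₂ = Oop q γ₁ γ₂ ∘ₗ ΔaPlus q γ₁ γ₂) ∧
    (∀ (v : HO ⊗[ℂ] HO) (e : ℂ), ΔaMinus q γ₁ γ₂ v = 0 → Δeps c₁ c₂ v = e • v →
      ΔaMinus q γ₁ γ₂ (Oop q γ₁ γ₂ v) = 0 ∧
      Δeps c₁ c₂ (Oop q γ₁ γ₂ v) = (e + 1) • Oop q γ₁ γ₂ v) := by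
  refine ⟨ΔaMinus_comp_Oop q γ₁ γ₂, Δeps_comp_Oop q γ₁ γ₂ c₁ c₂, ΔaPlus_comp_Oop q γ₁ γ₂,
    fun v e hlowest heigen => ⟨?_, ?_⟩⟩
  · rw [← LinearMap.comp_apply, ΔaMinus_comp_Oop, LinearMap.comp_apply, hlowest, map_zero]
  · rw [← LinearMap.comp_apply, Δeps_comp_Oop, LinearMap.add_apply, LinearMap.comp_apply, heigen,
      map_smul, add_smul, one_smul]

/-- `O = O_{(γ₁,γ₂)}` satisfies `[Δa⁻, O] = 0`, `[Δε, O] = O`, `[Δa⁺, O] = 0`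
(commutators written as equalities of compositions); consequently `O` maps lowest weight
vectors to lowest weight vectors, raising the `Δε`-eigenvalue by `1`. -/
theorem stmt5 (q γ₁ γ₂ c₁ c₂ : ℝ) (hq0 : 0 < q) (hq1 : q < 1)
    (hγ₁ : 0 < γ₁) (hγ₂ : 0 < γ₂) :
    (ΔaMinus q γ₁ γ₂ ∘ₗ Oop q γ₁ γ₂ = Oop q γ₁ γ₂ ∘ₗ ΔaMinus q γ₁ γ₂) ∧
    (Δeps c₁ c₂ ∘ₗ Oop q γ₁ γ₂ = Oop q γ₁ γ₂ ∘ₗ Δeps c₁ c₂ + Oop q γ₁ γ₂) ∧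
    (ΔaPlus q γ₁ γ₂ ∘ₗ Oop q γ₁ γ₂ = Oop q γ₁ γ₂ ∘ₗ ΔaPlus q γ₁ γ₂) ∧
    (∀ (v : HO ⊗[ℂ] HO) (e : ℂ), ΔaMinus q γ₁ γ₂ v = 0 → Δeps c₁ c₂ v = e • v →
      ΔaMinus q γ₁ γ₂ (Oop q γ₁ γ₂ v) = 0 ∧
      Δeps c₁ c₂ (Oop q γ₁ γ₂ v) = (e + 1) • Oop q γ₁ γ₂ v) :=
  stmt5_general q γ₁ γ₂ c₁ c₂
end
end
end

section
/- Set γ = γ₁ + γ₂ and, for i, j ∈ ℕ, define v_i^{(j)} = ([γ]_q^i · i!)^{−1/2} ([γ]_q^j · j!)^{−1/2} (Δa⁺)^i O^j (h₀ ⊗ h₀) in H^{(γ₁,c₁)} ⊗ H^{(γ₂,c₂)}. Then these vectors are orthonormal: ⟨v_i^{(j)}, v_{i'}^{(j')}⟩ = δ_{i i'} δ_{j j'} for all i, i', j, j' ∈ ℕ. -/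
noncomputable section
noncomputable section

open scoped TensorProduct

/-- The hermitian inner product on `α →₀ ℂ` making the standard basis orthonormal
(antilinear in the first argument). -/
def finner {α : Type*} (v w : α →₀ ℂ) : ℂ := v.sum fun a x => (starRingEnd ℂ) x * w a

/-- The hermitian inner product on `H ⊗ H` making the vectors `h_m ⊗ h_{m'}` orthonormal,
via the canonical identification of `(ℕ →₀ ℂ) ⊗[ℂ] (ℕ →₀ ℂ)` with `ℕ × ℕ →₀ ℂ`. -/
def tinner (v w : HO ⊗[ℂ] HO) : ℂ :=
  finner (finsuppTensorFinsupp' ℂ ℕ ℕ v) (finsuppTensorFinsupp' ℂ ℕ ℕ w)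

/-- The vectors `v_i^{(j)} = ([γ]_q^i i!)^{−1/2} ([γ]_q^j j!)^{−1/2} (Δa⁺)^i O^j (h₀ ⊗ h₀)`,
with `γ = γ₁ + γ₂`. -/
def vij (q γ₁ γ₂ : ℝ) (i j : ℕ) : HO ⊗[ℂ] HO :=
  (((Real.sqrt ((qnum q (γ₁ + γ₂)) ^ i * i.factorial))⁻¹ : ℝ) : ℂ) •
    (((Real.sqrt ((qnum q (γ₁ + γ₂)) ^ j * j.factorial))⁻¹ : ℝ) : ℂ) •
      ((ΔaPlus q γ₁ γ₂) ^ i) (((Oop q γ₁ γ₂) ^ j) (hv 0 ⊗ₜ[ℂ] hv 0))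

/-!
Both `Δa⁺` and `O` are raising operators `A⁺ = u (a⁺ ⊗ 1) + v (1 ⊗ a⁺)` with real coefficients;
their adjoints `A⁻ = u (a⁻ ⊗ 1) + v (1 ⊗ a⁻)` kill `h₀ ⊗ h₀`, and `[a⁻, a⁺] = [γ]_q` on each
factor gives `[A⁻, A'⁺] = u u' [γ₁]_q + v v' [γ₂]_q`. By `q^{γ₂}[γ₁]_q + q^{-γ₁}[γ₂]_q = [γ₁+γ₂]_q`
this is `[γ₁+γ₂]_q` for the pairs `(Δa⁻, Δa⁺)` and `(O†, O)`, and `0` for `(Δa⁻, O)`. For a pair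
with `[A⁻, A⁺] = N` and vectors `x, y` killed by `A⁻`, moving one `A⁺` across the inner product as
`A⁻` gives `⟨(A⁺)^i x, (A⁺)^{i'} y⟩ = δ_{i i'} N^i i! ⟨x, y⟩`. Apply this to `Δa⁺` with the vectors
`O^j (h₀ ⊗ h₀)`, which `Δa⁻` kills since it commutes with `O`, and then to `O` with `h₀ ⊗ h₀`.
-/

open scoped ComplexConjugate

section HermitianForm

variable {α β : Type*}

theorem finner_single_left (a : α) (x : ℂ) (w : α →₀ ℂ) :
    finner (Finsupp.single a x) w = conj x * w a :=
  Finsupp.sum_single_index (by simp)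

theorem finner_add_left (v v' w : α →₀ ℂ) : finner (v + v') w = finner v w + finner v' w := by
  classical
  exact Finsupp.sum_add_index' (by simp) (by simp [add_mul])

theorem finner_smul_left (c : ℂ) (v w : α →₀ ℂ) : finner (c • v) w = conj c * finner v w := by
  rw [finner, Finsupp.sum_smul_index' (by simp), finner, Finsupp.mul_sum]
  simp only [smul_eq_mul, map_mul, mul_assoc]

theorem finner_add_right (v w w' : α →₀ ℂ) : finner v (w + w') = finner v w + finner v w' := by
  simp only [finner, Finsupp.add_apply, mul_add, Finsupp.sum_add]

theorem finner_smul_right (c : ℂ) (v w : α →₀ ℂ) : finner v (c • w) = c * finner v w := by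
  simp only [finner, Finsupp.smul_apply, smul_eq_mul, Finsupp.mul_sum, mul_left_comm]

variable (α) in
def finnerₛₗ : (α →₀ ℂ) →ₗ⋆[ℂ] (α →₀ ℂ) →ₗ[ℂ] ℂ :=
  LinearMap.mk₂'ₛₗ _ _ finner finner_add_left finner_smul_left finner_add_right finner_smul_right

theorem finnerₛₗ_apply (v w : α →₀ ℂ) : finnerₛₗ α v w = finner v w := rfl

theorem finnerₛₗ_isSymm : (finnerₛₗ α).IsSymm := by
  refine LinearMap.isSymm_def.mpr fun v w => ?_
  induction v using Finsupp.induction_linear with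
  | zero => simp
  | add v v' hv hv' => simp [hv, hv']
  | single a x =>
    induction w using Finsupp.induction_linear with
    | zero => simp
    | add w w' hw hw' => simp [hw, hw']
    | single b y =>
      classical
      simp only [finnerₛₗ_apply, finner_single_left, Finsupp.single_apply, eq_comm (a := a)]
      split_ifs <;> simp [mul_comm]

variable (α β) in
def tinnerₛₗ : (α →₀ ℂ) ⊗[ℂ] (β →₀ ℂ) →ₗ⋆[ℂ] (α →₀ ℂ) ⊗[ℂ] (β →₀ ℂ) →ₗ[ℂ] ℂ :=
  ((finnerₛₗ (α × β)).comp (finsuppTensorFinsupp' ℂ α β).toLinearMap).compl₂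
    (finsuppTensorFinsupp' ℂ α β).toLinearMap

theorem tinnerₛₗ_apply (v w : HO ⊗[ℂ] HO) : tinnerₛₗ ℕ ℕ v w = tinner v w := rfl

theorem tinnerₛₗ_isSymm : (tinnerₛₗ α β).IsSymm :=
  LinearMap.isSymm_def.mpr fun _ _ => LinearMap.isSymm_def.mp finnerₛₗ_isSymm _ _

theorem tinnerₛₗ_tmul (a c : α →₀ ℂ) (b d : β →₀ ℂ) :
    tinnerₛₗ α β (a ⊗ₜ b) (c ⊗ₜ d) = finner a c * finner b d := by
  induction a using Finsupp.induction_linear with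
  | zero => simp [← finnerₛₗ_apply]
  | add a a' ha ha' => simp [TensorProduct.add_tmul, ha, ha', ← finnerₛₗ_apply, add_mul]
  | single m x =>
    induction b using Finsupp.induction_linear with
    | zero => simp [← finnerₛₗ_apply]
    | add b b' hb hb' => simp [TensorProduct.tmul_add, hb, hb', ← finnerₛₗ_apply, mul_add]
    | single n y =>
      simp only [tinnerₛₗ, LinearMap.compl₂_apply, LinearMap.comp_apply, LinearEquiv.coe_coe,
        finsuppTensorFinsupp'_single_tmul_single, finnerₛₗ_apply, finner_single_left,
        finsuppTensorFinsupp'_apply_apply, map_mul]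
      ring

end HermitianForm

section TensorComb

variable {R M N : Type*} [CommSemiring R] [AddCommMonoid M] [Module R M] [AddCommMonoid N]
  [Module R N]

def tensorComb (u v : R) (f : Module.End R M) (g : Module.End R N) : Module.End R (M ⊗[R] N) :=
  u • f.rTensor N + v • g.lTensor M

theorem tensorComb_mul_tensorComb {f f' : Module.End R M} {g g' : Module.End R N} {c d : R}
    (hf : f' * f = f * f' + c • 1) (hg : g' * g = g * g' + d • 1) (u v u' v' : R) :
    tensorComb u v f' g' * tensorComb u' v' f g =
      tensorComb u' v' f g * tensorComb u v f' g' + (u * u' * c + v * v' * d) • 1 := by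
  have hR : f'.rTensor N * f.rTensor N = f.rTensor N * f'.rTensor N + c • 1 := by
    rw [← LinearMap.rTensor_mul, ← LinearMap.rTensor_mul, hf, LinearMap.rTensor_add,
      LinearMap.rTensor_smul, Module.End.one_eq_id, LinearMap.rTensor_id]
    rfl
  have hL : g'.lTensor M * g.lTensor M = g.lTensor M * g'.lTensor M + d • 1 := by
    rw [← LinearMap.lTensor_mul, ← LinearMap.lTensor_mul, hg, LinearMap.lTensor_add,
      LinearMap.lTensor_smul, Module.End.one_eq_id, LinearMap.lTensor_id]
    rfl
  have hRL : ∀ (φ : Module.End R M) (ψ : Module.End R N),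
      φ.rTensor N * ψ.lTensor M = ψ.lTensor M * φ.rTensor N := fun φ ψ => by
    rw [Module.End.mul_eq_comp, Module.End.mul_eq_comp, LinearMap.rTensor_comp_lTensor,
      LinearMap.lTensor_comp_rTensor]
  simp only [tensorComb, add_mul, mul_add, smul_mul_assoc, mul_smul_comm, hR, hL, hRL]
  module

end TensorComb

section TensorAdjoint

variable {α β : Type*}

theorem tinnerₛₗ_rTensor {S S' : Module.End ℂ (α →₀ ℂ)}
    (h : ∀ v w, finner (S v) w = finner v (S' w)) (v w : (α →₀ ℂ) ⊗[ℂ] (β →₀ ℂ)) :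
    tinnerₛₗ α β (S.rTensor _ v) w = tinnerₛₗ α β v (S'.rTensor _ w) := by
  induction v using TensorProduct.induction_on with
  | zero => simp
  | add v v' hv hv' => simp only [map_add, LinearMap.add_apply, hv, hv']
  | tmul a b =>
    induction w using TensorProduct.induction_on with
    | zero => simp
    | add w w' hw hw' => simp only [map_add, hw, hw']
    | tmul c d => simp [tinnerₛₗ_tmul, h]

theorem tinnerₛₗ_lTensor {S S' : Module.End ℂ (β →₀ ℂ)}
    (h : ∀ v w, finner (S v) w = finner v (S' w)) (v w : (α →₀ ℂ) ⊗[ℂ] (β →₀ ℂ)) :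
    tinnerₛₗ α β (S.lTensor _ v) w = tinnerₛₗ α β v (S'.lTensor _ w) := by
  induction v using TensorProduct.induction_on with
  | zero => simp
  | add v v' hv hv' => simp only [map_add, LinearMap.add_apply, hv, hv']
  | tmul a b =>
    induction w using TensorProduct.induction_on with
    | zero => simp
    | add w w' hw hw' => simp only [map_add, hw, hw']
    | tmul c d => simp [tinnerₛₗ_tmul, h]

theorem tinnerₛₗ_tensorComb {f f' : Module.End ℂ (α →₀ ℂ)}
    {g g' : Module.End ℂ (β →₀ ℂ)} (hf : ∀ v w, finner (f v) w = finner v (f' w))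
    (hg : ∀ v w, finner (g v) w = finner v (g' w)) (u v : ℂ) (x y : (α →₀ ℂ) ⊗[ℂ] (β →₀ ℂ)) :
    tinnerₛₗ α β (tensorComb u v f g x) y =
      tinnerₛₗ α β x (tensorComb (conj u) (conj v) f' g' y) := by
  simp [tensorComb, tinnerₛₗ_rTensor hf, tinnerₛₗ_lTensor hg]

end TensorAdjoint

theorem mul_pow_succ_of_commutator {R A : Type*} [CommSemiring R] [Semiring A] [Algebra R A]
    {P M : A} {N : R} (h : M * P = P * M + N • 1) (k : ℕ) :
    M * P ^ (k + 1) = P ^ (k + 1) * M + ((k + 1 : R) * N) • P ^ k := by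
  induction k with
  | zero => simpa using h
  | succ k ih =>
    calc M * P ^ (k + 1 + 1) = (M * P ^ (k + 1)) * P := by rw [pow_succ _ (k + 1), mul_assoc]
      _ = P ^ (k + 1) * (M * P) + ((k + 1 : R) * N) • P ^ (k + 1) := by
        rw [ih, add_mul, smul_mul_assoc, mul_assoc, ← pow_succ]
      _ = _ := by
        rw [h, mul_add, ← mul_assoc, ← pow_succ, mul_smul_one, add_assoc, ← add_smul]
        push_cast
        ring_nf

section Fock

variable {V : Type*} [AddCommMonoid V] [Module ℂ V] {B : V →ₗ⋆[ℂ] V →ₗ[ℂ] ℂ}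
  {P M : Module.End ℂ V} {N : ℂ}

theorem inner_pow_apply_pow_apply (hB : B.IsSymm) (hadj : ∀ v w, B (P v) w = B v (M w))
    (hcomm : M * P = P * M + N • 1) {x y : V} (hx : M x = 0) (hy : M y = 0) (i i' : ℕ) :
    B ((P ^ i) x) ((P ^ i') y) = (if i = i' then N ^ i * i.factorial else 0) * B x y := by
  have hlower : ∀ k : ℕ, M ((P ^ (k + 1)) y) = ((k + 1 : ℂ) * N) • (P ^ k) y := fun k => by
    rw [← Module.End.mul_apply, mul_pow_succ_of_commutator hcomm, LinearMap.add_apply,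
      Module.End.mul_apply, hy, map_zero, zero_add, LinearMap.smul_apply]
  induction i generalizing i' with
  | zero =>
    rcases i' with _ | k
    · simp
    · rw [pow_succ', Module.End.mul_apply, ← LinearMap.isSymm_def.mp hB, hadj, pow_zero,
        Module.End.one_apply, hx, map_zero]
      simp
  | succ k ih =>
    rw [pow_succ', Module.End.mul_apply, hadj]
    rcases i' with _ | k'
    · simp [hy]
    · rw [hlower, map_smul, ih, smul_eq_mul]
      split_ifs with h₁ h₂ h₂
      · subst h₁
        push_cast [Nat.factorial_succ]
        ring
      · omega
      · omega
      · simp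

theorem inner_smul_pow_apply_smul_pow_apply (hB : B.IsSymm)
    (hadj : ∀ v w, B (P v) w = B v (M w)) {Q : ℝ} (hQ : 0 < Q) (hcomm : M * P = P * M + (Q : ℂ) • 1)
    {x y : V} (hx : M x = 0) (hy : M y = 0) (i i' : ℕ) :
    B ((((√(Q ^ i * i.factorial))⁻¹ : ℝ) : ℂ) • (P ^ i) x)
        ((((√(Q ^ i' * i'.factorial))⁻¹ : ℝ) : ℂ) • (P ^ i') y) =
      (if i = i' then 1 else 0) * B x y := by
  rw [LinearMap.map_smulₛₗ₂, map_smul, inner_pow_apply_pow_apply hB hadj hcomm hx hy,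
    Complex.conj_ofReal]
  split_ifs with h
  · subst h
    have hr : 0 < Q ^ i * i.factorial := by positivity
    have hnorm : (((√(Q ^ i * i.factorial))⁻¹ : ℝ) : ℂ) * (((√(Q ^ i * i.factorial))⁻¹ : ℝ) : ℂ) *
        ((Q : ℂ) ^ i * i.factorial) = 1 := by
      exact_mod_cast show (√(Q ^ i * i.factorial))⁻¹ * (√(Q ^ i * i.factorial))⁻¹ *
          (Q ^ i * i.factorial) = 1 by
        rw [← mul_inv, Real.mul_self_sqrt hr.le, inv_mul_cancel₀ hr.ne']
    simp only [smul_eq_mul]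
    linear_combination B x y * hnorm
  · simp

end Fock

section QNumber

variable {q : ℝ}

theorem qnum_pos (hq0 : 0 < q) (hq1 : q < 1) {γ : ℝ} (hγ : 0 < γ) : 0 < qnum q γ := by
  have hnum : q ^ γ < q ^ (-γ) := Real.rpow_lt_rpow_of_exponent_gt hq0 hq1 (neg_lt_self hγ)
  have hden : q < q⁻¹ := hq1.trans ((one_lt_inv₀ hq0).mpr hq1)
  exact div_pos_of_neg_of_neg (sub_neg.mpr hnum) (sub_neg.mpr hden)

theorem qnum_add (hq : 0 < q) (γ₁ γ₂ : ℝ) :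
    qnum q (γ₁ + γ₂) = q ^ γ₂ * qnum q γ₁ + q ^ (-γ₁) * qnum q γ₂ := by
  simp only [qnum, Real.rpow_neg hq.le, Real.rpow_add hq, mul_div_assoc']
  rw [← add_div]
  have := (Real.rpow_pos_of_pos hq γ₁).ne'
  have := (Real.rpow_pos_of_pos hq γ₂).ne'
  field_simp
  ring

theorem rpow_half_mul_self (hq : 0 < q) (γ : ℝ) : q ^ (γ / 2) * q ^ (γ / 2) = q ^ γ := by
  rw [← Real.rpow_add hq, add_halves]

theorem qnum_add_eq_sum_sq (hq : 0 < q) (γ₁ γ₂ : ℝ) :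
    q ^ (γ₂ / 2) * q ^ (γ₂ / 2) * qnum q γ₁ + q ^ (-(γ₁ / 2)) * q ^ (-(γ₁ / 2)) * qnum q γ₂ =
      qnum q (γ₁ + γ₂) := by
  rw [← neg_div, rpow_half_mul_self hq, rpow_half_mul_self hq, qnum_add hq]

-- The coefficients of `O` are `p √(B/A)` and `r √(A/B)`, with `A = [γ₁]_q` and `B = [γ₂]_q`.
theorem sqrt_ratio_mul_self_add (p r A B : ℝ) (hA : 0 < A) (hB : 0 < B) :
    (p * (√A)⁻¹ * √B) * (p * (√A)⁻¹ * √B) * A + (r * √A * (√B)⁻¹) * (r * √A * (√B)⁻¹) * B =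
      r * r * A + p * p * B := by
  obtain ⟨s, hs, rfl⟩ : ∃ s, 0 < s ∧ A = s ^ 2 :=
    ⟨√A, Real.sqrt_pos.2 hA, (Real.sq_sqrt hA.le).symm⟩
  obtain ⟨t, ht, rfl⟩ : ∃ t, 0 < t ∧ B = t ^ 2 :=
    ⟨√B, Real.sqrt_pos.2 hB, (Real.sq_sqrt hB.le).symm⟩
  rw [Real.sqrt_sq hs.le, Real.sqrt_sq ht.le]
  field_simp
  ring

theorem sqrt_ratio_cross (p r A B : ℝ) (hA : 0 < A) (hB : 0 < B) :
    r * (p * (√A)⁻¹ * √B) * A + p * -(r * √A * (√B)⁻¹) * B = 0 := by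
  obtain ⟨s, hs, rfl⟩ : ∃ s, 0 < s ∧ A = s ^ 2 :=
    ⟨√A, Real.sqrt_pos.2 hA, (Real.sq_sqrt hA.le).symm⟩
  obtain ⟨t, ht, rfl⟩ : ∃ t, 0 < t ∧ B = t ^ 2 :=
    ⟨√B, Real.sqrt_pos.2 hB, (Real.sq_sqrt hB.le).symm⟩
  rw [Real.sqrt_sq hs.le, Real.sqrt_sq ht.le]
  field_simp
  ring

end QNumber

section Oscillator

variable (q γ : ℝ)

theorem aPlus_single (m : ℕ) (x : ℂ) :
    aPlus q γ (Finsupp.single m x) =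
      Finsupp.single (m + 1) (x * ((√(qnum q γ) * √(m + 1) : ℝ) : ℂ)) := by
  rw [aPlus, Finsupp.lift_apply, Finsupp.sum_single_index (by simp), hv, smul_smul,
    Finsupp.smul_single_one]

theorem aMinus_single (m : ℕ) (x : ℂ) :
    aMinus q γ (Finsupp.single m x) =
      Finsupp.single (m - 1) (x * ((√(qnum q γ) * √m : ℝ) : ℂ)) := by
  rw [aMinus, Finsupp.lift_apply, Finsupp.sum_single_index (by simp), hv, smul_smul,
    Finsupp.smul_single_one]

theorem aMinus_hv_zero : aMinus q γ (hv 0) = 0 := by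
  simp [hv, aMinus_single]

theorem finner_aPlus_left (v w : HO) : finner (aPlus q γ v) w = finner v (aMinus q γ w) := by
  simp only [← finnerₛₗ_apply]
  induction v using Finsupp.induction_linear with
  | zero => simp
  | add v v' hv hv' => simp only [map_add, LinearMap.add_apply, hv, hv']
  | single m x =>
    induction w using Finsupp.induction_linear with
    | zero => simp
    | add w w' hw hw' => simp only [map_add, hw, hw']
    | single n y =>
      simp only [finnerₛₗ_apply, aPlus_single, aMinus_single, finner_single_left,
        Finsupp.single_apply]
      rcases n with _ | n
      · simp
      · rcases eq_or_ne m n with rfl | hmn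
        · simp
          ring
        · simp [hmn.symm]

variable {q γ}

theorem aMinus_aPlus_single (hQ : 0 ≤ qnum q γ) (m : ℕ) (x : ℂ) :
    aMinus q γ (aPlus q γ (Finsupp.single m x)) =
      Finsupp.single m (x * ((qnum q γ * (m + 1) : ℝ) : ℂ)) := by
  rw [aPlus_single, aMinus_single, Nat.add_sub_cancel, mul_assoc, ← Complex.ofReal_mul,
    Nat.cast_succ, mul_mul_mul_comm, Real.mul_self_sqrt hQ, Real.mul_self_sqrt (by positivity)]

theorem aPlus_aMinus_single (hQ : 0 ≤ qnum q γ) (m : ℕ) (x : ℂ) :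
    aPlus q γ (aMinus q γ (Finsupp.single m x)) =
      Finsupp.single m (x * ((qnum q γ * m : ℝ) : ℂ)) := by
  rcases m with _ | m
  · simp [aMinus_single]
  · rw [aMinus_single, aPlus_single, Nat.add_sub_cancel, mul_assoc, ← Complex.ofReal_mul,
      Nat.cast_succ, mul_mul_mul_comm, Real.mul_self_sqrt hQ, Real.mul_self_sqrt (by positivity)]

theorem aMinus_mul_aPlus (hQ : 0 ≤ qnum q γ) :
    aMinus q γ * aPlus q γ = aPlus q γ * aMinus q γ + (qnum q γ : ℂ) • 1 :=
  Finsupp.lhom_ext fun m x => by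
    simp only [Module.End.mul_apply, LinearMap.add_apply, LinearMap.smul_apply,
      Module.End.one_apply, aMinus_aPlus_single hQ, aPlus_aMinus_single hQ, Finsupp.smul_single,
      ← Finsupp.single_add, smul_eq_mul]
    congr 1
    push_cast
    ring

end Oscillator

section Coproduct

variable {q γ₁ γ₂ : ℝ}

theorem ΔaPlus_eq_tensorComb (q γ₁ γ₂ : ℝ) :
    ΔaPlus q γ₁ γ₂ =
      tensorComb ((q ^ (γ₂ / 2) : ℝ) : ℂ) ((q ^ (-(γ₁ / 2)) : ℝ) : ℂ) (aPlus q γ₁) (aPlus q γ₂) :=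
  rfl

theorem ΔaMinus_eq_tensorComb (q γ₁ γ₂ : ℝ) :
    ΔaMinus q γ₁ γ₂ =
      tensorComb ((q ^ (γ₂ / 2) : ℝ) : ℂ) ((q ^ (-(γ₁ / 2)) : ℝ) : ℂ) (aMinus q γ₁) (aMinus q γ₂) :=
  rfl

theorem Oop_eq_tensorComb (q γ₁ γ₂ : ℝ) :
    Oop q γ₁ γ₂ =
      tensorComb ((q ^ (-(γ₁ / 2)) * (√(qnum q γ₁))⁻¹ * √(qnum q γ₂) : ℝ) : ℂ)
        (-((q ^ (γ₂ / 2) * √(qnum q γ₁) * (√(qnum q γ₂))⁻¹ : ℝ) : ℂ)) (aPlus q γ₁) (aPlus q γ₂) :=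
  rfl

def OopAdj (q γ₁ γ₂ : ℝ) : Module.End ℂ (HO ⊗[ℂ] HO) :=
  tensorComb ((q ^ (-(γ₁ / 2)) * (√(qnum q γ₁))⁻¹ * √(qnum q γ₂) : ℝ) : ℂ)
    (-((q ^ (γ₂ / 2) * √(qnum q γ₁) * (√(qnum q γ₂))⁻¹ : ℝ) : ℂ)) (aMinus q γ₁) (aMinus q γ₂)

theorem tinnerₛₗ_ΔaPlus_left (q γ₁ γ₂ : ℝ) (v w : HO ⊗[ℂ] HO) :
    tinnerₛₗ ℕ ℕ (ΔaPlus q γ₁ γ₂ v) w = tinnerₛₗ ℕ ℕ v (ΔaMinus q γ₁ γ₂ w) := by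
  rw [ΔaPlus_eq_tensorComb, tinnerₛₗ_tensorComb (finner_aPlus_left q γ₁) (finner_aPlus_left q γ₂),
    Complex.conj_ofReal, Complex.conj_ofReal, ΔaMinus_eq_tensorComb]

theorem tinnerₛₗ_Oop_left (q γ₁ γ₂ : ℝ) (v w : HO ⊗[ℂ] HO) :
    tinnerₛₗ ℕ ℕ (Oop q γ₁ γ₂ v) w = tinnerₛₗ ℕ ℕ v (OopAdj q γ₁ γ₂ w) := by
  rw [Oop_eq_tensorComb, tinnerₛₗ_tensorComb (finner_aPlus_left q γ₁) (finner_aPlus_left q γ₂),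
    map_neg, Complex.conj_ofReal, Complex.conj_ofReal, OopAdj]

theorem tensorComb_aMinus_vacuum (u v : ℂ) :
    tensorComb u v (aMinus q γ₁) (aMinus q γ₂) (hv 0 ⊗ₜ hv 0) = 0 := by
  simp [tensorComb, aMinus_hv_zero]

theorem ΔaMinus_mul_ΔaPlus (hq : 0 < q) (h₁ : 0 ≤ qnum q γ₁) (h₂ : 0 ≤ qnum q γ₂) :
    ΔaMinus q γ₁ γ₂ * ΔaPlus q γ₁ γ₂ =
      ΔaPlus q γ₁ γ₂ * ΔaMinus q γ₁ γ₂ + (qnum q (γ₁ + γ₂) : ℂ) • 1 := by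
  rw [ΔaMinus_eq_tensorComb, ΔaPlus_eq_tensorComb,
    tensorComb_mul_tensorComb (aMinus_mul_aPlus h₁) (aMinus_mul_aPlus h₂),
    ← qnum_add_eq_sum_sq hq]
  push_cast
  rfl

theorem OopAdj_mul_Oop (hq : 0 < q) (h₁ : 0 < qnum q γ₁) (h₂ : 0 < qnum q γ₂) :
    OopAdj q γ₁ γ₂ * Oop q γ₁ γ₂ = Oop q γ₁ γ₂ * OopAdj q γ₁ γ₂ + (qnum q (γ₁ + γ₂) : ℂ) • 1 := by
  rw [OopAdj, Oop_eq_tensorComb,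
    tensorComb_mul_tensorComb (aMinus_mul_aPlus h₁.le) (aMinus_mul_aPlus h₂.le),
    ← qnum_add_eq_sum_sq hq]
  congr 2
  rw [← sqrt_ratio_mul_self_add _ _ _ _ h₁ h₂]
  push_cast
  ring

theorem ΔaMinus_commute_Oop (h₁ : 0 < qnum q γ₁) (h₂ : 0 < qnum q γ₂) :
    Commute (ΔaMinus q γ₁ γ₂) (Oop q γ₁ γ₂) := by
  rw [Commute, SemiconjBy, ΔaMinus_eq_tensorComb, Oop_eq_tensorComb,
    tensorComb_mul_tensorComb (aMinus_mul_aPlus h₁.le) (aMinus_mul_aPlus h₂.le)]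
  simp only [← Complex.ofReal_neg, ← Complex.ofReal_mul, ← Complex.ofReal_add,
    sqrt_ratio_cross _ _ _ _ h₁ h₂, Complex.ofReal_zero, zero_smul, add_zero]

end Coproduct

theorem stmt9_general (q γ₁ γ₂ : ℝ) (hq0 : 0 < q) (hq1 : q < 1)
    (hγ₁ : 0 < γ₁) (hγ₂ : 0 < γ₂) :
    ∀ i i' j j' : ℕ,
      tinner (vij q γ₁ γ₂ i j) (vij q γ₁ γ₂ i' j') =
        if i = i' ∧ j = j' then 1 else 0 := by
  intro i i' j j'
  have h₁ := qnum_pos hq0 hq1 hγ₁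
  have h₂ := qnum_pos hq0 hq1 hγ₂
  have hQ := qnum_pos hq0 hq1 (add_pos hγ₁ hγ₂)
  set Ω : HO ⊗[ℂ] HO := hv 0 ⊗ₜ hv 0
  have hΩ : tinnerₛₗ ℕ ℕ Ω Ω = 1 := by simp [Ω, tinnerₛₗ_tmul, hv, finner_single_left]
  have hvac : ∀ (c : ℂ) (k : ℕ), ΔaMinus q γ₁ γ₂ (c • (Oop q γ₁ γ₂ ^ k) Ω) = 0 := fun c k => by
    rw [map_smul, ← Module.End.mul_apply, ((ΔaMinus_commute_Oop h₁ h₂).pow_right k).eq,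
      Module.End.mul_apply, ΔaMinus_eq_tensorComb, tensorComb_aMinus_vacuum, map_zero, smul_zero]
  rw [← tinnerₛₗ_apply, vij, vij, ← LinearMap.map_smul (ΔaPlus q γ₁ γ₂ ^ i),
    ← LinearMap.map_smul (ΔaPlus q γ₁ γ₂ ^ i'),
    inner_smul_pow_apply_smul_pow_apply tinnerₛₗ_isSymm (tinnerₛₗ_ΔaPlus_left q γ₁ γ₂) hQ
      (ΔaMinus_mul_ΔaPlus hq0 h₁.le h₂.le) (hvac _ j) (hvac _ j'),
    inner_smul_pow_apply_smul_pow_apply tinnerₛₗ_isSymm (tinnerₛₗ_Oop_left q γ₁ γ₂) hQ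
      (OopAdj_mul_Oop hq0 h₁ h₂) (tensorComb_aMinus_vacuum _ _) (tensorComb_aMinus_vacuum _ _),
    hΩ, mul_one, ite_zero_mul_ite_zero, mul_one]

/-- the vectors `v_i^{(j)}` are orthonormal:
`⟨v_i^{(j)}, v_{i'}^{(j')}⟩ = δ_{ii'} δ_{jj'}`. -/
theorem stmt9 (q γ₁ γ₂ c₁ c₂ : ℝ) (hq0 : 0 < q) (hq1 : q < 1)
    (hγ₁ : 0 < γ₁) (hγ₂ : 0 < γ₂) :
    ∀ i i' j j' : ℕ,
      tinner (vij q γ₁ γ₂ i j) (vij q γ₁ γ₂ i' j') =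
        if i = i' ∧ j = j' then 1 else 0 :=
  stmt9_general q γ₁ γ₂ hq0 hq1 hγ₁ hγ₂
end
end
end

section
/- Fix n ≥ 2, a real number q with 0 < q < 1, and γ > 0, and let V be a complex vector space with basis {w_{i,j} : 1 ≤ i ≤ j ≤ n−1}. Define linear maps σ₁, …, σ_{n−1} on V by (where j, k denote indices with {i−1, i, i+1} ∩ {j, k} = ∅, and only formulas with all indices in range apply): σ_i w_{j,k} = w_{j,k}; σ_i w_{i,i} = q^{−4γ} w_{i,i}; σ_i w_{i,k} = −q^{−2γ} w_{i,k}; σ_i w_{k,i} = −q^{−2γ} w_{k,i}; σ_i w_{i+1,k} = q^{−γ} w_{i,k} + w_{i+1,k}; σ_i w_{k,i+1} = q^{−γ} w_{k,i} + w_{k,i+1}; σ_i w_{i−1,k} = q^{−γ} w_{i,k} + w_{i−1,k}; σ_i w_{k,i−1} = q^{−γ} w_{k,i} + w_{k,i−1}; σ_i w_{i−1,i} = −q^{−2γ}(w_{i−1,i} + q^{−γ} w_{i,i}); σ_i w_{i,i+1} = −q^{−2γ}(w_{i,i+1} + q^{−γ} w_{i,i}); σ_i w_{i−1,i−1} = q^{−2γ}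 w_{i,i} + 2q^{−γ} w_{i−1,i} + w_{i−1,i−1}; σ_i w_{i+1,i+1} = q^{−2γ} w_{i,i} + 2q^{−γ} w_{i,i+1} + w_{i+1,i+1}; σ_i w_{i−1,i+1} = q^{−2γ} w_{i,i} + q^{−γ}(w_{i−1,i} + w_{i,i+1}) + w_{i−1,i+1}. Then σ_i σ_j = σ_j σ_i for |i−j| > 1 and σ_i σ_{i+1} σ_i = σ_{i+1} σ_i σ_{i+1} for 1 ≤ i ≤ n−2; i.e. the σ_i define a representation of the braid group B_n on V of dimension n(n−1)/2. -/
/-!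
Put `t = q^(-γ)`. The formulas say that `w j k` transforms like the symmetric product `e_j e_k`
under the representation `ρ` of `B_n` on `ℂ^(n-1)` by the pseudo-reflections
`ρ_i = 1 - e_i ⊗ f_i`, where `f_i (e_j)` is the `(i, j)` entry of the `t`-deformed Cartan matrix
of type `A` (`1 + t²` on the diagonal, `-t` next to it); up to rescaling the basis, `ρ` is the
reduced Burau representation with parameter `t²`. Two pseudo-reflections `1 - x ⊗ f` and
`1 - y ⊗ g` commute when `f y = g x = 0` and satisfy the braid relation when
`f x = g y = 1 + f y * g x`, and both conditions can be read off the Cartan matrix. As the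
`w j k` span `V`, the relations pass from `ρ` to `σ = Sym² ρ`, and `σ_i` is invertible because
`ρ_i` is (`f_i (e_i) = 1 + t² ≠ 1`).
-/

/-- The braid relations: the braid group `B_n` is the group presented by `n−1` generators
`σ₁, …, σ_{n−1}` subject to `σᵢσⱼ = σⱼσᵢ` for `|i−j| > 1` and `σᵢσ_{i+1}σᵢ = σ_{i+1}σᵢσ_{i+1}`. -/
def braidRels (n : ℕ) : Set (FreeGroup (Fin (n - 1))) :=
  {r | (∃ i j : Fin (n - 1), ((i : ℕ) + 2 ≤ (j : ℕ) ∨ (j : ℕ) + 2 ≤ (i : ℕ)) ∧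
          r = FreeGroup.of i * FreeGroup.of j * (FreeGroup.of j * FreeGroup.of i)⁻¹) ∨
       (∃ i j : Fin (n - 1), (j : ℕ) = (i : ℕ) + 1 ∧
          r = FreeGroup.of i * FreeGroup.of j * FreeGroup.of i *
              (FreeGroup.of j * FreeGroup.of i * FreeGroup.of j)⁻¹)}

/-- `j` is at distance at least `2` from `i` (i.e. `j ∉ {i−1, i, i+1}`). -/
def far {n : ℕ} (i j : Fin (n - 1)) : Prop := (j : ℕ) + 1 < (i : ℕ) ∨ (i : ℕ) + 1 < (j : ℕ)

namespace Module

variable {R M : Type*} [CommRing R] [AddCommGroup M] [Module R M] {x y : M} {f g : Dual R M}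

lemma commute_preReflection (hf : f y = 0) (hg : g x = 0) :
    Commute (preReflection x f) (preReflection y g) := by
  ext z
  simp only [End.mul_apply, preReflection_apply, map_sub, map_smul, hf, hg]
  module

lemma preReflection_braid (hx : f x = 1 + f y * g x) (hy : g y = 1 + f y * g x) :
    preReflection x f * preReflection y g * preReflection x f =
      preReflection y g * preReflection x f * preReflection y g := by
  ext z
  simp only [End.mul_apply, preReflection_apply, map_sub, map_smul]
  linear_combination (norm := module) hx • (f z • x) - hy • (g z • y)

lemma surjective_preReflection {K V : Type*} [Field K] [AddCommGroup V] [Module K V] {x : V}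
    {f : Dual K V} (h : f x ≠ 1) : Function.Surjective (preReflection x f) := by
  intro z
  have hc : f z / (1 - f x) * (1 - f x) = f z := div_mul_cancel₀ _ (sub_ne_zero.mpr h.symm)
  refine ⟨z + (f z / (1 - f x)) • x, ?_⟩
  simp only [preReflection_apply, map_add, map_smul]
  linear_combination (norm := module) hc • x

end Module

lemma Fin.eq_or_adjacent_or_far {m : ℕ} (i j : Fin m) :
    i = j ∨ (j : ℕ) + 1 = i ∨ (j : ℕ) = i + 1 ∨ (j : ℕ) + 1 < i ∨ (i : ℕ) + 1 < j := by
  rcases eq_or_ne i j with h | h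
  · exact Or.inl h
  · have := Fin.val_ne_of_ne h
    omega

section Burau

variable {R : Type*} [CommRing R] {m : ℕ}

def burauMatrix (t : R) : Matrix (Fin m) (Fin m) R := fun i j =>
  if i = j then 1 + t ^ 2 else if (i : ℕ) + 1 = j ∨ (j : ℕ) + 1 = i then -t else 0

def burauForm (t : R) (i : Fin m) : Module.Dual R (Fin m → R) :=
  LinearMap.proj i ∘ₗ (burauMatrix t).mulVecLin

def burauGen (t : R) (i : Fin m) : Module.End R (Fin m → R) :=
  Module.preReflection (Pi.single i 1) (burauForm t i)

lemma burauForm_single (t : R) (i j : Fin m) :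
    burauForm t i (Pi.single j 1) = burauMatrix t i j := by
  simp [burauForm]

lemma burauGen_single (t : R) (i j : Fin m) :
    burauGen t i (Pi.single j 1) = Pi.single j 1 - burauMatrix t i j • Pi.single i 1 := by
  rw [burauGen, Module.preReflection_apply, burauForm_single]

lemma burauGen_commute (t : R) {i j : Fin m} (h : (i : ℕ) + 2 ≤ j) :
    Commute (burauGen t i) (burauGen t j) := by
  apply Module.commute_preReflection <;>
    simp (disch := omega) only [burauForm_single, burauMatrix, Fin.ext_iff, if_neg]

lemma burauGen_braid (t : R) {i j : Fin m} (h : (j : ℕ) = i + 1) :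
    burauGen t i * burauGen t j * burauGen t i = burauGen t j * burauGen t i * burauGen t j := by
  apply Module.preReflection_braid <;>
    simp (disch := omega) only [burauForm_single, burauMatrix, Fin.ext_iff, if_pos, if_neg,
      ↓reduceIte] <;> ring

lemma burauGen_surjective {K : Type*} [Field K] {t : K} (ht : t ≠ 0) (i : Fin m) :
    Function.Surjective (burauGen t i) := by
  apply Module.surjective_preReflection
  rw [burauForm_single, burauMatrix, if_pos rfl]
  simpa using ht

end Burau

section SymmetricSquare

variable {R V : Type*} [CommRing R] [AddCommGroup V] [Module R V] {m : ℕ}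
  (w : Fin m → Fin m → V)

noncomputable def symProd : (Fin m → R) →ₗ[R] (Fin m → R) →ₗ[R] V :=
  (Pi.basisFun R (Fin m)).constr R fun j => (Pi.basisFun R (Fin m)).constr R fun k =>
    if j ≤ k then w j k else w k j

lemma symProd_single_single (j k : Fin m) :
    symProd w (Pi.single j (1 : R)) (Pi.single k 1) = if j ≤ k then w j k else w k j := by
  simp only [symProd, ← Pi.basisFun_apply, Module.Basis.constr_basis]

lemma symProd_comm (x y : Fin m → R) : symProd w x y = symProd w y x := by
  suffices symProd w = (symProd w).flip from congr($this x y)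
  refine LinearMap.ext_basis (Pi.basisFun R (Fin m)) (Pi.basisFun R (Fin m)) fun j k => ?_
  simp only [LinearMap.flip_apply, Pi.basisFun_apply, symProd_single_single]
  rcases lt_trichotomy j k with h | rfl | h
  · simp [h.le, h.not_ge]
  · rfl
  · simp [h.le, h.not_ge]

lemma w_eq_symProd {j k : Fin m} (h : j ≤ k) :
    w j k = symProd w (Pi.single j (1 : R)) (Pi.single k 1) := by
  rw [symProd_single_single, if_pos h]

def IsSymSq (f : Module.End R V) (g : Module.End R (Fin m → R)) : Prop :=
  ∀ x y, f (symProd w x y) = symProd w (g x) (g y)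

variable {w}

lemma isSymSq_of_le {f : Module.End R V} {g : Module.End R (Fin m → R)}
    (h : ∀ j k, j ≤ k → f (w j k) = symProd w (g (Pi.single j 1)) (g (Pi.single k 1))) :
    IsSymSq w f g := by
  suffices (symProd w).compr₂ f = (symProd w).compl₁₂ g g from fun x y => congr($this x y)
  refine LinearMap.ext_basis (Pi.basisFun R (Fin m)) (Pi.basisFun R (Fin m)) fun j k => ?_
  simp only [LinearMap.compr₂_apply, LinearMap.compl₁₂_apply, Pi.basisFun_apply,
    symProd_single_single]
  split_ifs with hjk
  · exact h j k hjk
  · rw [h k j (le_of_not_ge hjk), symProd_comm]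

lemma IsSymSq.mul {f f' : Module.End R V} {g g' : Module.End R (Fin m → R)}
    (h : IsSymSq w f g) (h' : IsSymSq w f' g') : IsSymSq w (f * f') (g * g') := fun x y => by
  rw [Module.End.mul_apply, h' x y, h]
  rfl

lemma IsSymSq.eq {b : Module.Basis {p : Fin m × Fin m // p.1 ≤ p.2} R V}
    (hb : ∀ p, b p = w p.1.1 p.1.2) {f f' : Module.End R V} {g : Module.End R (Fin m → R)}
    (h : IsSymSq w f g) (h' : IsSymSq w f' g) : f = f' :=
  b.ext fun ⟨⟨j, k⟩, hjk⟩ => by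
    rw [hb, w_eq_symProd (R := R) w hjk, h, h']

lemma IsSymSq.range_eq_top {b : Module.Basis {p : Fin m × Fin m // p.1 ≤ p.2} R V}
    (hb : ∀ p, b p = w p.1.1 p.1.2) {f : Module.End R V} {g : Module.End R (Fin m → R)}
    (h : IsSymSq w f g) (hg : Function.Surjective g) : LinearMap.range f = ⊤ := by
  rw [eq_top_iff, ← b.span_eq, Submodule.span_le]
  rintro _ ⟨⟨⟨j, k⟩, hjk⟩, rfl⟩
  obtain ⟨x, hx⟩ := hg (Pi.single j 1)
  obtain ⟨y, hy⟩ := hg (Pi.single k 1)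
  refine ⟨symProd w x y, ?_⟩
  rw [h, hx, hy, hb, w_eq_symProd (R := R) w hjk]

end SymmetricSquare

section Formulas

variable {R V : Type*} [CommRing R] [AddCommGroup V] [Module R V] {m : ℕ}

lemma isSymSq_burauGen (t : R) (w : Fin m → Fin m → V) (σ : Fin m → Module.End R V)
    (h1 : ∀ i j k : Fin m, (j : ℕ) + 1 < i ∨ (i : ℕ) + 1 < j → (k : ℕ) + 1 < i ∨ (i : ℕ) + 1 < k →
      j ≤ k → σ i (w j k) = w j k)
    (h2 : ∀ i : Fin m, σ i (w i i) = t ^ 4 • w i i)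
    (h3 : ∀ i k : Fin m, (k : ℕ) + 1 < i ∨ (i : ℕ) + 1 < k → i ≤ k → σ i (w i k) = -t ^ 2 • w i k)
    (h4 : ∀ i k : Fin m, (k : ℕ) + 1 < i ∨ (i : ℕ) + 1 < k → k ≤ i → σ i (w k i) = -t ^ 2 • w k i)
    (h5 : ∀ i i' k : Fin m, (i' : ℕ) = i + 1 → (k : ℕ) + 1 < i ∨ (i : ℕ) + 1 < k → i' ≤ k →
      σ i (w i' k) = t • w i k + w i' k)
    (h6 : ∀ i i' k : Fin m, (i' : ℕ) = i + 1 → (k : ℕ) + 1 < i ∨ (i : ℕ) + 1 < k → k ≤ i →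
      σ i (w k i') = t • w k i + w k i')
    (h7 : ∀ i i'' k : Fin m, (i : ℕ) = i'' + 1 → (k : ℕ) + 1 < i ∨ (i : ℕ) + 1 < k → i'' ≤ k →
      σ i (w i'' k) = t • w i k + w i'' k)
    (h8 : ∀ i i'' k : Fin m, (i : ℕ) = i'' + 1 → (k : ℕ) + 1 < i ∨ (i : ℕ) + 1 < k → k ≤ i'' →
      σ i (w k i'') = t • w k i + w k i'')
    (h9 : ∀ i i'' : Fin m, (i : ℕ) = i'' + 1 → σ i (w i'' i) = -t ^ 2 • (w i'' i + t • w i i))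
    (h10 : ∀ i i' : Fin m, (i' : ℕ) = i + 1 → σ i (w i i') = -t ^ 2 • (w i i' + t • w i i))
    (h11 : ∀ i i'' : Fin m, (i : ℕ) = i'' + 1 →
      σ i (w i'' i'') = t ^ 2 • w i i + (2 * t) • w i'' i + w i'' i'')
    (h12 : ∀ i i' : Fin m, (i' : ℕ) = i + 1 →
      σ i (w i' i') = t ^ 2 • w i i + (2 * t) • w i i' + w i' i')
    (h13 : ∀ i i'' i' : Fin m, (i : ℕ) = i'' + 1 → (i' : ℕ) = i + 1 →
      σ i (w i'' i') = t ^ 2 • w i i + t • (w i'' i + w i i') + w i'' i')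
    (i : Fin m) : IsSymSq w (σ i) (burauGen t i) := by
  refine isSymSq_of_le fun j k hjk => ?_
  simp only [burauGen_single, map_sub, map_smul, LinearMap.sub_apply, LinearMap.smul_apply,
    symProd_single_single, burauMatrix]
  rw [Fin.le_iff_val_le_val] at hjk
  rcases Fin.eq_or_adjacent_or_far i j with rfl | hj | hj | hj | hj <;>
  rcases Fin.eq_or_adjacent_or_far i k with rfl | hk | hk | hk | hk <;>
  -- Each position of `j ≤ k` relative to `i` is covered by one of `h1`–`h13`, once `j = k` is
  -- made syntactic in the cases where both are `i - 1` or both are `i + 1`.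
  first
  | omega
  | (try (have e : j = k := Fin.ext (by omega); subst e))
    simp (disch := omega) only [Fin.ext_iff, Fin.le_iff_val_le_val, if_pos, if_neg, ↓reduceIte,
      h1, h2, h3, h4, h5, h6, h7, h8, h9, h10, h11, h12, h13]
    module

end Formulas

lemma exists_braidRels_hom {M : Type*} [Monoid M] {n : ℕ} {s : Fin (n - 1) → M}
    (hs : ∀ i, IsUnit (s i))
    (hcomm : ∀ i j : Fin (n - 1), (i : ℕ) + 2 ≤ j → Commute (s i) (s j))
    (hbraid : ∀ i j : Fin (n - 1), (j : ℕ) = i + 1 → s i * s j * s i = s j * s i * s j) :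
    ∃ φ : PresentedGroup (braidRels n) →* Mˣ, ∀ i, (φ (PresentedGroup.of i) : M) = s i := by
  let u i := (hs i).unit
  have hrel : ∀ r ∈ braidRels n, FreeGroup.lift u r = 1 := by
    rintro r (⟨i, j, hij, rfl⟩ | ⟨i, j, hij, rfl⟩) <;>
      simp only [map_mul, map_inv, FreeGroup.lift_apply_of, mul_inv_eq_one]
    · rcases hij with hij | hij
      exacts [(Commute.units_of_val (hcomm i j hij)).eq,
        (Commute.units_of_val (hcomm j i hij)).eq.symm]
    · exact Units.ext (hbraid i j hij)
  exact ⟨PresentedGroup.toGroup hrel, fun i => by rw [PresentedGroup.toGroup.of]; rfl⟩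

lemma card_subtype_fst_le_snd (m : ℕ) :
    Fintype.card {p : Fin m × Fin m // p.1 ≤ p.2} = (m + 1).choose 2 := by
  rw [← Fintype.card_congr Sym2.sortEquiv, Sym2.card, Fintype.card_fin]

theorem stmt17_general (n : ℕ) (q γ : ℝ) (hq0 : 0 < q)
    (V : Type*) [AddCommGroup V] [Module ℂ V]
    (w : Fin (n - 1) → Fin (n - 1) → V)
    (b : Module.Basis {p : Fin (n - 1) × Fin (n - 1) // p.1 ≤ p.2} ℂ V)
    (hb : ∀ p : {p : Fin (n - 1) × Fin (n - 1) // p.1 ≤ p.2}, b p = w p.1.1 p.1.2)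
    (σ : Fin (n - 1) → (V →ₗ[ℂ] V))
    (h1 : ∀ i j k : Fin (n-1), far i j → far i k → j ≤ k → σ i (w j k) = w j k)
    (h2 : ∀ i : Fin (n-1), σ i (w i i) = ((q ^ (-(4 * γ)) : ℝ) : ℂ) • w i i)
    (h3 : ∀ i k : Fin (n-1), far i k → i ≤ k →
      σ i (w i k) = -(((q ^ (-(2 * γ)) : ℝ) : ℂ)) • w i k)
    (h4 : ∀ i k : Fin (n-1), far i k → k ≤ i →
      σ i (w k i) = -(((q ^ (-(2 * γ)) : ℝ) : ℂ)) • w k i)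
    (h5 : ∀ i i' k : Fin (n-1), (i' : ℕ) = (i : ℕ) + 1 → far i k → i' ≤ k →
      σ i (w i' k) = ((q ^ (-γ) : ℝ) : ℂ) • w i k + w i' k)
    (h6 : ∀ i i' k : Fin (n-1), (i' : ℕ) = (i : ℕ) + 1 → far i k → k ≤ i →
      σ i (w k i') = ((q ^ (-γ) : ℝ) : ℂ) • w k i + w k i')
    (h7 : ∀ i i'' k : Fin (n-1), (i : ℕ) = (i'' : ℕ) + 1 → far i k → i'' ≤ k →
      σ i (w i'' k) = ((q ^ (-γ) : ℝ) : ℂ) • w i k + w i'' k)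
    (h8 : ∀ i i'' k : Fin (n-1), (i : ℕ) = (i'' : ℕ) + 1 → far i k → k ≤ i'' →
      σ i (w k i'') = ((q ^ (-γ) : ℝ) : ℂ) • w k i + w k i'')
    (h9 : ∀ i i'' : Fin (n-1), (i : ℕ) = (i'' : ℕ) + 1 →
      σ i (w i'' i) = -(((q ^ (-(2 * γ)) : ℝ) : ℂ)) • (w i'' i + ((q ^ (-γ) : ℝ) : ℂ) • w i i))
    (h10 : ∀ i i' : Fin (n-1), (i' : ℕ) = (i : ℕ) + 1 →
      σ i (w i i') = -(((q ^ (-(2 * γ)) : ℝ) : ℂ)) • (w i i' + ((q ^ (-γ) : ℝ) : ℂ) • w i i))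
    (h11 : ∀ i i'' : Fin (n-1), (i : ℕ) = (i'' : ℕ) + 1 →
      σ i (w i'' i'') = ((q ^ (-(2 * γ)) : ℝ) : ℂ) • w i i +
        ((2 * q ^ (-γ) : ℝ) : ℂ) • w i'' i + w i'' i'')
    (h12 : ∀ i i' : Fin (n-1), (i' : ℕ) = (i : ℕ) + 1 →
      σ i (w i' i') = ((q ^ (-(2 * γ)) : ℝ) : ℂ) • w i i +
        ((2 * q ^ (-γ) : ℝ) : ℂ) • w i i' + w i' i')
    (h13 : ∀ i i'' i' : Fin (n-1), (i : ℕ) = (i'' : ℕ) + 1 → (i' : ℕ) = (i : ℕ) + 1 →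
      σ i (w i'' i') = ((q ^ (-(2 * γ)) : ℝ) : ℂ) • w i i +
        ((q ^ (-γ) : ℝ) : ℂ) • (w i'' i + w i i') + w i'' i') :
    (∀ i j : Fin (n - 1), (i : ℕ) + 2 ≤ (j : ℕ) ∨ (j : ℕ) + 2 ≤ (i : ℕ) →
      σ i ∘ₗ σ j = σ j ∘ₗ σ i) ∧
    (∀ i j : Fin (n - 1), (j : ℕ) = (i : ℕ) + 1 →
      σ i ∘ₗ σ j ∘ₗ σ i = σ j ∘ₗ σ i ∘ₗ σ j) ∧
    Module.finrank ℂ V = n * (n - 1) / 2 ∧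
    ∃ φ : PresentedGroup (braidRels n) →* (Module.End ℂ V)ˣ,
      ∀ i : Fin (n - 1), (↑(φ (PresentedGroup.of i)) : Module.End ℂ V) = σ i := by
  set t : ℂ := ((q ^ (-γ) : ℝ) : ℂ)
  have ht : t ≠ 0 := Complex.ofReal_ne_zero.mpr (Real.rpow_pos_of_pos hq0 _).ne'
  have hpow (k : ℕ) : ((q ^ (-(k * γ)) : ℝ) : ℂ) = t ^ k := by
    rw [show -(k * γ) = -γ * k by ring, Real.rpow_mul hq0.le, Real.rpow_natCast,
      Complex.ofReal_pow]
  have h2t : ((2 * q ^ (-γ) : ℝ) : ℂ) = 2 * t := by push_cast; rfl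
  obtain ⟨h2γ, h4γ⟩ : ((q ^ (-(2 * γ)) : ℝ) : ℂ) = t ^ 2 ∧ ((q ^ (-(4 * γ)) : ℝ) : ℂ) = t ^ 4 := by
    constructor <;> exact_mod_cast hpow _
  simp only [h2γ, h4γ, h2t] at h2 h3 h4 h9 h10 h11 h12 h13
  have hσ i : IsSymSq w (σ i) (burauGen t i) :=
    isSymSq_burauGen t w σ h1 h2 h3 h4 h5 h6 h7 h8 h9 h10 h11 h12 h13 i
  have hcomm (i j : Fin (n - 1)) (h : (i : ℕ) + 2 ≤ j) : Commute (σ i) (σ j) :=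
    ((hσ i).mul (hσ j)).eq hb ((burauGen_commute t h).eq ▸ (hσ j).mul (hσ i))
  have hbraid (i j : Fin (n - 1)) (h : (j : ℕ) = i + 1) : σ i * σ j * σ i = σ j * σ i * σ j :=
    (((hσ i).mul (hσ j)).mul (hσ i)).eq hb
      ((burauGen_braid t h).symm ▸ ((hσ j).mul (hσ i)).mul (hσ j))
  have : FiniteDimensional ℂ V := Module.Finite.of_basis b
  have hunit i : IsUnit (σ i) := (LinearMap.isUnit_iff_range_eq_top _).mpr
    ((hσ i).range_eq_top hb (burauGen_surjective ht i))
  refine ⟨fun i j h => ?_, hbraid, ?_, exists_braidRels_hom hunit hcomm hbraid⟩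
  · rcases h with h | h
    exacts [(hcomm i j h).eq, (hcomm j i h).eq.symm]
  · rw [Module.finrank_eq_card_basis b, card_subtype_fst_le_snd, Nat.choose_two_right]
    cases n <;> simp

/-- let `V` be a complex vector space with basis `{w_{i,j} : i ≤ j}` indexed by
ordered pairs of indices in `{1, …, n−1}`, and let `σ_i` act by the explicit formulas below
(those of the Lawrence–Krammer–Bigelow-type representation obtained from the level-2 lowest
weight spaces). Then the `σ_i` satisfy the braid relations, so they define a representation of
the braid group `B_n` on `V`, of dimension `n(n−1)/2`. -/
theorem stmt17 (n : ℕ) (hn : 2 ≤ n) (q γ : ℝ) (hq0 : 0 < q) (hq1 : q < 1) (hγ : 0 < γ)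
    (V : Type*) [AddCommGroup V] [Module ℂ V]
    (w : Fin (n - 1) → Fin (n - 1) → V)
    (b : Module.Basis {p : Fin (n - 1) × Fin (n - 1) // p.1 ≤ p.2} ℂ V)
    (hb : ∀ p : {p : Fin (n - 1) × Fin (n - 1) // p.1 ≤ p.2}, b p = w p.1.1 p.1.2)
    (σ : Fin (n - 1) → (V →ₗ[ℂ] V))
    (h1 : ∀ i j k : Fin (n-1), far i j → far i k → j ≤ k → σ i (w j k) = w j k)
    (h2 : ∀ i : Fin (n-1), σ i (w i i) = ((q ^ (-(4 * γ)) : ℝ) : ℂ) • w i i)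
    (h3 : ∀ i k : Fin (n-1), far i k → i ≤ k →
      σ i (w i k) = -(((q ^ (-(2 * γ)) : ℝ) : ℂ)) • w i k)
    (h4 : ∀ i k : Fin (n-1), far i k → k ≤ i →
      σ i (w k i) = -(((q ^ (-(2 * γ)) : ℝ) : ℂ)) • w k i)
    (h5 : ∀ i i' k : Fin (n-1), (i' : ℕ) = (i : ℕ) + 1 → far i k → i' ≤ k →
      σ i (w i' k) = ((q ^ (-γ) : ℝ) : ℂ) • w i k + w i' k)
    (h6 : ∀ i i' k : Fin (n-1), (i' : ℕ) = (i : ℕ) + 1 → far i k → k ≤ i →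
      σ i (w k i') = ((q ^ (-γ) : ℝ) : ℂ) • w k i + w k i')
    (h7 : ∀ i i'' k : Fin (n-1), (i : ℕ) = (i'' : ℕ) + 1 → far i k → i'' ≤ k →
      σ i (w i'' k) = ((q ^ (-γ) : ℝ) : ℂ) • w i k + w i'' k)
    (h8 : ∀ i i'' k : Fin (n-1), (i : ℕ) = (i'' : ℕ) + 1 → far i k → k ≤ i'' →
      σ i (w k i'') = ((q ^ (-γ) : ℝ) : ℂ) • w k i + w k i'')
    (h9 : ∀ i i'' : Fin (n-1), (i : ℕ) = (i'' : ℕ) + 1 →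
      σ i (w i'' i) = -(((q ^ (-(2 * γ)) : ℝ) : ℂ)) • (w i'' i + ((q ^ (-γ) : ℝ) : ℂ) • w i i))
    (h10 : ∀ i i' : Fin (n-1), (i' : ℕ) = (i : ℕ) + 1 →
      σ i (w i i') = -(((q ^ (-(2 * γ)) : ℝ) : ℂ)) • (w i i' + ((q ^ (-γ) : ℝ) : ℂ) • w i i))
    (h11 : ∀ i i'' : Fin (n-1), (i : ℕ) = (i'' : ℕ) + 1 →
      σ i (w i'' i'') = ((q ^ (-(2 * γ)) : ℝ) : ℂ) • w i i +
        ((2 * q ^ (-γ) : ℝ) : ℂ) • w i'' i + w i'' i'')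
    (h12 : ∀ i i' : Fin (n-1), (i' : ℕ) = (i : ℕ) + 1 →
      σ i (w i' i') = ((q ^ (-(2 * γ)) : ℝ) : ℂ) • w i i +
        ((2 * q ^ (-γ) : ℝ) : ℂ) • w i i' + w i' i')
    (h13 : ∀ i i'' i' : Fin (n-1), (i : ℕ) = (i'' : ℕ) + 1 → (i' : ℕ) = (i : ℕ) + 1 →
      σ i (w i'' i') = ((q ^ (-(2 * γ)) : ℝ) : ℂ) • w i i +
        ((q ^ (-γ) : ℝ) : ℂ) • (w i'' i + w i i') + w i'' i') :
    (∀ i j : Fin (n - 1), (i : ℕ) + 2 ≤ (j : ℕ) ∨ (j : ℕ) + 2 ≤ (i : ℕ) →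
      σ i ∘ₗ σ j = σ j ∘ₗ σ i) ∧
    (∀ i j : Fin (n - 1), (j : ℕ) = (i : ℕ) + 1 →
      σ i ∘ₗ σ j ∘ₗ σ i = σ j ∘ₗ σ i ∘ₗ σ j) ∧
    Module.finrank ℂ V = n * (n - 1) / 2 ∧
    ∃ φ : PresentedGroup (braidRels n) →* (Module.End ℂ V)ˣ,
      ∀ i : Fin (n - 1), (↑(φ (PresentedGroup.of i)) : Module.End ℂ V) = σ i :=
  stmt17_general n q γ hq0 V w b hb σ h1 h2 h3 h4 h5 h6 h7 h8 h9 h10 h11 h12 h13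
end
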